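/- Let z_1,...,z_n be i.i.d. draws from a probability vector π on ℕ where π_k = v_k ∏_{i<k}(1-v_i) with v_1, v_2, ... i.i.d. Beta(1,α). Then for any fixed z ∈ ℕ^n, P(z_1,...,z_n = z) = (Γ(α)/Γ(n+α)) · (∏_{c ∈ C_z} Γ(|c|+1)) · ∏_{k=1}^m α/(g_k+α), where m = max_i z_i, g_k = #{i : z_i ≥ k}, and C_z is the partition induced by z. -/

import Mathlib

open MeasureTheory ProbabilityTheory

/-- The Beta(1,α) distribution on `[0,1]`, with density `α(1-x)^{α-1}`. -/
noncomputable def betaOne (α : ℝ) : Measure ℝ :=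
  (volume.restrict (Set.Ioo (0:ℝ) 1)).withDensity
    (fun x => ENNReal.ofReal (α * (1 - x) ^ (α - 1)))

/-! Expanding the stick-breaking weights, `∏ i, π (z i) = ∏_{k ≤ m} v_k ^ a_k (1 - v_k) ^ g_{k+1}`
with `a_k = #{i | z i = k}`. By independence the expectation factorises into Beta(1,α) moments
`α B(a_k + 1, g_{k+1} + α)`; as `g_k = a_k + g_{k+1}`, the `k`-th moment is
`α / (g_k + α) · Γ(a_k + 1) · Γ(g_{k+1} + α) / Γ(g_k + α)`, and the last ratios telescope to
`Γ(α) / Γ(n + α)` because `g_1 = n` and `g_{m+1} = 0`. -/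

open Finset

lemma integral_Ioo_rpow_mul_one_sub_rpow {p q : ℝ} (hp : 0 < p) (hq : 0 < q) :
    ∫ x in Set.Ioo (0 : ℝ) 1, x ^ (p - 1) * (1 - x) ^ (q - 1) = beta p q := by
  have hofReal : Complex.betaIntegral p q =
      ↑(∫ x in (0 : ℝ)..1, x ^ (p - 1) * (1 - x) ^ (q - 1)) := by
    rw [Complex.betaIntegral, ← intervalIntegral.integral_ofReal]
    refine intervalIntegral.integral_congr fun x hx => ?_
    rw [Set.uIcc_of_le zero_le_one] at hx
    simp only [Complex.ofReal_mul, Complex.ofReal_cpow hx.1,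
      Complex.ofReal_cpow (sub_nonneg.2 hx.2)]
    push_cast
    rfl
  rw [beta_eq_betaIntegralReal p q hp hq, hofReal, Complex.ofReal_re,
    intervalIntegral.integral_of_le zero_le_one, integral_Ioc_eq_integral_Ioo]

lemma integral_pow_mul_one_sub_pow_betaOne {α : ℝ} (hα : 0 < α) (a b : ℕ) :
    ∫ x, x ^ a * (1 - x) ^ b ∂betaOne α =
      α / (a + b + α) * Real.Gamma (a + 1) * (Real.Gamma (b + α) / Real.Gamma (a + b + α)) := by
  rw [betaOne, integral_withDensity_eq_integral_toReal_smul (by fun_prop)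
    (ae_of_all _ fun _ => ENNReal.ofReal_lt_top)]
  have hbeta := integral_Ioo_rpow_mul_one_sub_rpow (p := a + 1) (q := b + α)
    (by positivity) (by positivity)
  calc _ = ∫ x in Set.Ioo (0 : ℝ) 1, α * (x ^ ((a + 1 : ℝ) - 1) * (1 - x) ^ ((b + α) - 1)) := by
        refine setIntegral_congr_fun measurableSet_Ioo fun x ⟨hx0, hx1⟩ => ?_
        have h1x : 0 < 1 - x := by linarith
        rw [smul_eq_mul, ENNReal.toReal_ofReal (by positivity),
          add_sub_cancel_right, Real.rpow_natCast, add_sub_assoc,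
          Real.rpow_add h1x, Real.rpow_natCast]
        ring
    _ = _ := by
        have hΓ : Real.Gamma (a + 1 + (b + α)) = (a + b + α) * Real.Gamma (a + b + α) := by
          rw [← Real.Gamma_add_one (by positivity)]; ring_nf
        rw [integral_const_mul, hbeta, beta, hΓ]
        field_simp

lemma ProbabilityTheory.iIndepFun.integral_finset_prod_comp {Ω ι β : Type*}
    [MeasurableSpace Ω] [MeasurableSpace β] {P : Measure Ω} {X : ι → Ω → β}
    (hX : iIndepFun X P) (hXm : ∀ k, Measurable (X k))
    {f : ι → β → ℝ} (hf : ∀ k, Measurable (f k)) (s : Finset ι) :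
    ∫ ω, ∏ k ∈ s, f k (X k ω) ∂P = ∏ k ∈ s, ∫ ω, f k (X k ω) ∂P := by
  have := (hX.precomp (g := ((↑) : s → ι)) Subtype.val_injective).integral_fun_prod_comp
    (f := fun k : s => f k) (fun k => (hXm k).aemeasurable) (fun k => (hf k).aestronglyMeasurable)
  convert this using 1
  · congr with ω
    exact (prod_coe_sort s _).symm
  · exact (prod_coe_sort s _).symm

lemma prod_Icc_div_of_ne_zero {G : Type*} [CommGroupWithZero G] {f : ℕ → G} (hf : ∀ k, f k ≠ 0)
    (m : ℕ) : ∏ k ∈ Icc 1 m, f (k + 1) / f k = f (m + 1) / f 1 := by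
  lift f to ℕ → Gˣ using fun k => (hf k).isUnit
  rw [← Ico_add_one_right_eq_Icc]
  simpa [Units.coe_prod] using congrArg Units.val (prod_Ico_div f (by omega : 1 ≤ m + 1))

section Counting

variable {ι : Type*} [Fintype ι]

lemma card_filter_le_eq_card_filter_eq_add [DecidableEq ι] (z : ι → ℕ) (k : ℕ) :
    #{i | k ≤ z i} = #{i | z i = k} + #{i | k + 1 ≤ z i} := by
  rw [← card_union_of_disjoint (disjoint_filter.2 fun _ _ h1 h2 => by omega)]
  congr 1
  ext i
  simp only [mem_filter, mem_union, mem_univ, true_and]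
  omega

lemma prod_comp_eq_prod_pow_card {M β : Type*} [CommMonoid M] [DecidableEq β] (u : β → M)
    (z : ι → β) {s : Finset β} (hz : ∀ i, z i ∈ s) :
    ∏ i, u (z i) = ∏ k ∈ s, u k ^ #{i | z i = k} := by
  rw [← prod_fiberwise_of_maps_to (fun i _ => hz i)]
  refine prod_congr rfl fun k _ => ?_
  rw [← prod_const]
  exact prod_congr rfl fun i hi => by rw [(mem_filter.1 hi).2]

lemma prod_prod_Ico_eq_prod_pow_card {M : Type*} [CommMonoid M] (w : ℕ → M) (z : ι → ℕ) {m : ℕ}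
    (hz : ∀ i, z i ≤ m + 1) :
    ∏ i, ∏ j ∈ Ico 1 (z i), w j = ∏ k ∈ Icc 1 m, w k ^ #{i | k + 1 ≤ z i} := by
  have hIco : ∀ i, Ico 1 (z i) = {k ∈ Icc 1 m | k + 1 ≤ z i} := fun i => by
    ext k
    simp only [mem_Ico, mem_filter, mem_Icc]
    have := hz i
    omega
  simp_rw [hIco, prod_filter]
  rw [prod_comm]
  refine prod_congr rfl fun k _ => ?_
  rw [prod_ite, prod_const, prod_const_one, mul_one]

lemma prod_image_fiber_eq_prod {M β : Type*} [CommMonoid M] [DecidableEq ι] [DecidableEq β]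
    (z : ι → β) {F : Finset ι → M} (hF : F ∅ = 1) {s : Finset β} (hz : ∀ i, z i ∈ s) :
    ∏ c ∈ (univ.image z).image (fun k => ({i | z i = k} : Finset ι)), F c =
      ∏ k ∈ s, F {i | z i = k} := by
  rw [prod_image fun k hk k' _ hkk' => ?_]
  · refine prod_subset (fun k hk => ?_) (fun k _ hk => ?_)
    · obtain ⟨i, -, rfl⟩ := mem_image.1 hk
      exact hz i
    · rw [filter_eq_empty_iff.2 fun i _ hi => hk (mem_image.2 ⟨i, mem_univ i, hi⟩), hF]
  · obtain ⟨i, -, rfl⟩ := mem_image.1 hk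
    have hi : i ∈ ({j | z j = z i} : Finset ι) := by simp
    rw [hkk'] at hi
    exact (mem_filter.1 hi).2

end Counting

theorem stmt4_general {Ω : Type*} [MeasurableSpace Ω] (P : Measure Ω)
    (α : ℝ) (hα : 0 < α) (v : ℕ → Ω → ℝ)
    (hv_meas : ∀ i, Measurable (v i))
    (hv_indep : iIndepFun v P)
    (hv_law : ∀ i, P.map (v i) = betaOne α)
    (n : ℕ)
    (π : ℕ → Ω → ℝ)
    (hπ : ∀ k ω, π k ω = v k ω * ∏ i ∈ Finset.Ico 1 k, (1 - v i ω))
    (Z : Ω → Fin n → ℕ)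
    (hZ : ∀ y : Fin n → ℕ, (∀ i, 1 ≤ y i) →
      P {ω | Z ω = y} = ENNReal.ofReal (∫ ω, ∏ i, π (y i) ω ∂P))
    (z : Fin n → ℕ) (hz : ∀ i, 1 ≤ z i) (m : ℕ) (hm : m = Finset.univ.sup z) :
    (P {ω | Z ω = z}).toReal =
      (Real.Gamma α / Real.Gamma (n + α)) *
        (∏ c ∈ (Finset.image z Finset.univ).image
            (fun k => Finset.univ.filter (fun i => z i = k)),
          Real.Gamma (c.card + 1)) *
        ∏ k ∈ Finset.Icc 1 m,
          (α / ((Finset.univ.filter (fun i => k ≤ z i)).card + α)) := by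
  have hzm : ∀ i, z i ∈ Icc 1 m := fun i => mem_Icc.2 ⟨hz i, hm ▸ le_sup (mem_univ i)⟩
  have hcard_one : #{i | 1 ≤ z i} = n := by simp [hz]
  have hcard_top : #{i | m + 1 ≤ z i} = 0 := by
    simp only [card_eq_zero, filter_eq_empty_iff]
    exact fun i _ => by have := mem_Icc.1 (hzm i); omega
  have hπz : ∀ ω, ∏ i, π (z i) ω =
      ∏ k ∈ Icc 1 m, v k ω ^ #{i | z i = k} * (1 - v k ω) ^ #{i | k + 1 ≤ z i} := fun ω => by
    simp only [hπ, prod_mul_distrib, prod_comp_eq_prod_pow_card (v · ω) z hzm,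
      prod_prod_Ico_eq_prod_pow_card (1 - v · ω) z fun i => (mem_Icc.1 (hzm i)).2.trans m.le_succ]
  have hmoment : ∀ k (a b : ℕ), ∫ ω, v k ω ^ a * (1 - v k ω) ^ b ∂P = α / (a + b + α) *
      Real.Gamma (a + 1) * (Real.Gamma (b + α) / Real.Gamma (a + b + α)) := fun k a b => by
    rw [← integral_pow_mul_one_sub_pow_betaOne hα, ← hv_law k,
      integral_map (hv_meas k).aemeasurable (by fun_prop)]
  have hint : ∫ ω, ∏ i, π (z i) ω ∂P = ∏ k ∈ Icc 1 m, α / (#{i | k ≤ z i} + α) *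
      Real.Gamma (#{i | z i = k} + 1) *
        (Real.Gamma (#{i | k + 1 ≤ z i} + α) / Real.Gamma (#{i | k ≤ z i} + α)) := by
    simp_rw [hπz]
    rw [hv_indep.integral_finset_prod_comp hv_meas
      (f := fun k x => x ^ #{i | z i = k} * (1 - x) ^ #{i | k + 1 ≤ z i}) (fun k => by fun_prop)]
    refine prod_congr rfl fun k _ => ?_
    rw [hmoment, card_filter_le_eq_card_filter_eq_add z k]
    push_cast
    ring
  rw [hZ z hz, hint, ENNReal.toReal_ofReal (prod_nonneg fun k _ => by positivity),
    prod_mul_distrib, prod_mul_distrib,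
    prod_Icc_div_of_ne_zero (f := fun k => Real.Gamma (#{i | k ≤ z i} + α))
      (fun k => (Real.Gamma_pos_of_pos (by positivity)).ne'),
    hcard_top, hcard_one, prod_image_fiber_eq_prod z (by simp) hzm, Nat.cast_zero, zero_add]
  ring

/-- Lemma A: if `v 1, v 2, ...` are i.i.d. Beta(1,α), `π k = v k ∏_{i<k} (1 - v i)` are the
stick-breaking weights, and `Z = (z 1, ..., z n)` are conditionally i.i.d. draws from `π`
(so that `P(Z = y) = E[∏ i, π (y i)]`), then for any fixed `z ∈ {1,2,...}^n`,
`P(Z = z) = (Γ(α)/Γ(n+α)) · (∏_{c ∈ C_z} Γ(|c|+1)) · ∏_{k=1}^m α/(g_k+α)`,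
where `m = max_i z_i`, `g_k = #{i : z_i ≥ k}`, and `C_z` is the induced partition. -/
theorem stmt4 {Ω : Type*} [MeasurableSpace Ω] (P : Measure Ω) [IsProbabilityMeasure P]
    (α : ℝ) (hα : 0 < α) (v : ℕ → Ω → ℝ)
    (hv_meas : ∀ i, Measurable (v i))
    (hv_indep : iIndepFun v P)
    (hv_law : ∀ i, P.map (v i) = betaOne α)
    (n : ℕ) (hn : 1 ≤ n)
    (π : ℕ → Ω → ℝ)
    (hπ : ∀ k ω, π k ω = v k ω * ∏ i ∈ Finset.Ico 1 k, (1 - v i ω))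
    (Z : Ω → Fin n → ℕ)
    (hZ : ∀ y : Fin n → ℕ, (∀ i, 1 ≤ y i) →
      P {ω | Z ω = y} = ENNReal.ofReal (∫ ω, ∏ i, π (y i) ω ∂P))
    (z : Fin n → ℕ) (hz : ∀ i, 1 ≤ z i) (m : ℕ) (hm : m = Finset.univ.sup z) :
    (P {ω | Z ω = z}).toReal =
      (Real.Gamma α / Real.Gamma (n + α)) *
        (∏ c ∈ (Finset.image z Finset.univ).image
            (fun k => Finset.univ.filter (fun i => z i = k)),
          Real.Gamma (c.card + 1)) *
        ∏ k ∈ Finset.Icc 1 m,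
          (α / ((Finset.univ.filter (fun i => k ≤ z i)).card + α)) :=
  stmt4_general P α hα v hv_meas hv_indep hv_law n π hπ Z hZ z hz m hm
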